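/- Let 𝒯 be a finite set of templates and fix a finite proposition set AP. For finite pointed labelled graphs (G,v) and (G',v') over AP, there exists a bounded 𝒯-GNN 𝒩 with Boolean classification satisfying 𝒩(G,v) ≠ 𝒩(G',v') if and only if there exists l ∈ ℕ such that (G,v) and (G',v') are not graded l-𝒯-bisimilar. -/

import Mathlib

set_option maxHeartbeats 1000000

attribute [local instance 10] Classical.propDecidable

/-- A template `T = (V, E⁺, E⁻, r)`: vertex set `Fin (n+1)` (cardinality `n+1`),
root `0`, edges `pos`, non-edges `neg`, with `pos ∩ neg = ∅`. -/
structure Template where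
  n : ℕ
  pos : Finset (Fin (n + 1) × Fin (n + 1))
  neg : Finset (Fin (n + 1) × Fin (n + 1))
  disj : ∀ p, ¬(p ∈ pos ∧ p ∈ neg)

/-- A labelled directed graph with labels in `Λ`: a finite vertex set (a finite
subset of `ℕ`), an edge relation `E ⊆ V × V`, and a labelling of the nodes. -/
structure LGraph (Λ : Type) where
  verts : Finset ℕ
  edge : ℕ → ℕ → Prop
  lab : ℕ → Λ
  edge_mem : ∀ u w, edge u w → u ∈ verts ∧ w ∈ verts

/-- `f` is a template embedding of `T` into the pointed graph `(G, w)`: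
an injective map sending the root to `w`, `E⁺`-pairs to edges and `E⁻`-pairs to
non-edges. -/
def IsEmb {Λ : Type} (T : Template) (G : LGraph Λ) (w : ℕ) (f : Fin (T.n + 1) → ℕ) : Prop :=
  Function.Injective f ∧ f 0 = w ∧ (∀ i, f i ∈ G.verts) ∧
    (∀ p ∈ T.pos, G.edge (f p.1) (f p.2)) ∧ (∀ p ∈ T.neg, ¬ G.edge (f p.1) (f p.2))

/-- The (finite) set `emb(T,(G,w))` of template embeddings of `T` into `(G, w)`. -/
noncomputable def embFinset {Λ : Type} (T : Template) (G : LGraph Λ) (w : ℕ) :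
    Finset (Fin (T.n + 1) → ℕ) :=
  (Fintype.piFinset fun _ : Fin (T.n + 1) => G.verts).filter (IsEmb T G w)

/-- Forth condition: any `k` pairwise distinct template embeddings of `T` at `(G,v)`
can be matched by `k` pairwise distinct embeddings at `(G',v')`, pointwise related
by `Z`. -/
def Forth {Λ : Type} (Z : ℕ → ℕ → Prop) (T : Template) (G G' : LGraph Λ)
    (v v' : ℕ) (k : ℕ) : Prop :=
  ∀ F : Fin k → (Fin (T.n + 1) → ℕ), Function.Injective F → (∀ i, IsEmb T G v (F i)) →
    ∃ F' : Fin k → (Fin (T.n + 1) → ℕ), Function.Injective F' ∧ (∀ i, IsEmb T G' v' (F' i)) ∧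
      ∀ i u, Z (F i u) (F' i u)

/-- `Z` is a graded `l`-`𝒯`-bisimulation between `G` and `G'`, where the allowed
multiplicities `k` in the back-and-forth conditions are those satisfying `P`. -/
def IsBisimP {Λ : Type} (𝒯 : Finset Template) (P : ℕ → Prop) (G G' : LGraph Λ) :
    ℕ → (ℕ → ℕ → Prop) → Prop
  | 0, Z => ∀ v v', Z v v' → G.lab v = G'.lab v'
  | l + 1, Z => ∃ Z', IsBisimP 𝒯 P G G' l Z' ∧
      ∀ v v', Z v v' → Z' v v' ∧ ∀ T ∈ 𝒯, ∀ k, P k →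
        Forth Z' T G G' v v' k ∧ Forth (fun a b => Z' b a) T G' G v' v k

/-- `(G,v)` and `(G',v')` are graded `l`-`𝒯`-bisimilar. -/
def GBisimilar {Λ : Type} (𝒯 : Finset Template) (l : ℕ) (G : LGraph Λ) (v : ℕ)
    (G' : LGraph Λ) (v' : ℕ) : Prop :=
  ∃ Z, IsBisimP 𝒯 (fun k => 1 ≤ k) G G' l Z ∧ Z v v'

/-- `(G,v)` and `(G',v')` are `l`-`c`-`𝒯`-bisimilar (multiplicities restricted to `k ≤ c`). -/
def BBisimilar {Λ : Type} (𝒯 : Finset Template) (l c : ℕ) (G : LGraph Λ) (v : ℕ)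
    (G' : LGraph Λ) (v' : ℕ) : Prop :=
  ∃ Z, IsBisimP 𝒯 (fun k => 1 ≤ k ∧ k ≤ c) G G' l Z ∧ Z v v'

/-- `A↾c`: cap all multiplicities of a multiset at `c`. -/
noncomputable def mcap {α : Type} (c : ℕ) (m : Multiset α) : Multiset α :=
  m.toFinset.val.bind fun a => Multiset.replicate (min c (m.count a)) a

/-- The `𝒯`-WL colouring of `G` after `l` rounds, using `hash0` for the initial
colouring and `hash` for the refinement rounds; at each round the new colour of `v`
hashes its previous colour together with, for each template `T ∈ 𝒯`, the multiset of
`T`-labelled colourings induced by the template embeddings at `v`. -/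
noncomputable def colWL {Λ C : Type} (𝒯 : Finset Template) (hash0 : Λ → C)
    (hash : C → ((T : {x // x ∈ 𝒯}) → Multiset (Fin (T.1.n + 1) → C)) → C)
    (G : LGraph Λ) : ℕ → ℕ → C
  | 0, v => hash0 (G.lab v)
  | l + 1, v =>
      hash (colWL 𝒯 hash0 hash G l v)
        (fun T => (embFinset T.1 G v).val.map
          (fun f => fun u => colWL 𝒯 hash0 hash G l (f u)))

/-- A multiset function is `c`-bounded if its value is unchanged when all
multiplicities larger than `c` are replaced by `c`. -/
def CBoundedFun {α β : Type} (c : ℕ) (g : Multiset α → β) : Prop :=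
  ∀ m, g m = g (mcap c m)

/-- An `nAr`-ary `L`-layer `𝒯`-GNN with feature dimension `d`: templates from `𝒯`,
template-aggregation functions (invariant under root-fixing label-preserving template
automorphisms), outer multiset aggregation functions, combination functions, and a
Boolean classification function. -/
structure TGNN (𝒯 : Finset Template) (d nAr L : ℕ) where
  temp : Fin L → Fin nAr → Template
  temp_mem : ∀ l j, temp l j ∈ 𝒯
  aggT : (l : Fin L) → (j : Fin nAr) → ((Fin ((temp l j).n + 1) → (Fin d → ℝ)) → (Fin d → ℝ))
  aggT_inv : ∀ (l : Fin L) (j : Fin nAr) (σ : Equiv.Perm (Fin ((temp l j).n + 1)))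
      (lab₁ lab₂ : Fin ((temp l j).n + 1) → (Fin d → ℝ)),
      σ 0 = 0 →
      (∀ p : Fin ((temp l j).n + 1) × Fin ((temp l j).n + 1),
        p ∈ (temp l j).pos ↔ (σ p.1, σ p.2) ∈ (temp l j).pos) →
      (∀ p : Fin ((temp l j).n + 1) × Fin ((temp l j).n + 1),
        p ∈ (temp l j).neg ↔ (σ p.1, σ p.2) ∈ (temp l j).neg) →
      (∀ u, u ≠ 0 → lab₁ u = lab₂ (σ u)) →
      aggT l j lab₁ = aggT l j lab₂
  agg : Fin L → Fin nAr → Multiset (Fin d → ℝ) → (Fin d → ℝ)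
  comb : Fin L → (Fin d → ℝ) → (Fin nAr → (Fin d → ℝ)) → (Fin d → ℝ)
  cls : (Fin d → ℝ) → Bool

/-- The feature vector `λ^l(v)` of node `v` after `l` layers of the `𝒯`-GNN `N` on
input graph `G`. -/
noncomputable def TGNN.feat {𝒯 : Finset Template} {d nAr L : ℕ} (N : TGNN 𝒯 d nAr L)
    (G : LGraph (Fin d → ℝ)) : ℕ → ℕ → (Fin d → ℝ)
  | 0, v => G.lab v
  | l + 1, v =>
      if h : l < L then
        N.comb ⟨l, h⟩ (N.feat G l v)
          (fun j => N.agg ⟨l, h⟩ j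
            ((embFinset (N.temp ⟨l, h⟩ j) G v).val.map
              (fun f => N.aggT ⟨l, h⟩ j (fun u => N.feat G l (f u)))))
      else fun _ => 0

/-- A `𝒯`-GNN is `c`-bounded if all its outer aggregation functions are `c`-bounded. -/
def TGNN.IsCBounded {𝒯 : Finset Template} {d nAr L : ℕ} (N : TGNN 𝒯 d nAr L) (c : ℕ) : Prop :=
  ∀ l j, CBoundedFun c (N.agg l j)

def boolToReal (b : Bool) : ℝ := if b then 1 else 0

/-- Identify a `{0,1}^d`-labelled graph with a real-vector labelled graph. -/
def LGraph.toReal {d : ℕ} (G : LGraph (Fin d → Bool)) : LGraph (Fin d → ℝ) :=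
  ⟨G.verts, G.edge, fun v i => boolToReal (G.lab v i), G.edge_mem⟩

/-- Initialize real feature vectors of dimension `d'` from `{0,1}^a`-labels
(the first `a` coordinates hold the truth values of the propositions, the rest are `0`). -/
def initG {a : ℕ} (d' : ℕ) (G : LGraph (Fin a → Bool)) : LGraph (Fin d' → ℝ) :=
  ⟨G.verts, G.edge, fun v i => if h : (i : ℕ) < a then boolToReal (G.lab v ⟨i, h⟩) else 0,
    G.edge_mem⟩

/-- Formulae of graded template modal logic `GML(𝒯)` over propositions `AP`
(`⊤` included; a modality `⟨T⟩^{≥j}(φ₁,…,φ_{n_T})` takes `n_T = |V_T| - 1` arguments). -/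
inductive GML (AP : Type) : Type
  | top : GML AP
  | prop : AP → GML AP
  | neg : GML AP → GML AP
  | and : GML AP → GML AP → GML AP
  | dia : (T : Template) → ℕ → (Fin T.n → GML AP) → GML AP

/-- Semantics of `GML(𝒯)` on pointed labelled graphs:
`(G,v) ⊨ ⟨T⟩^{≥j}(φ⃗)` iff at least `j` embeddings `f ∈ emb(T,(G,v))` satisfy
`(G, f(i)) ⊨ φᵢ` for all `1 ≤ i ≤ n_T`. -/
def Sat {AP : Type} (G : LGraph (AP → Bool)) : GML AP → ℕ → Prop
  | .top, _ => True
  | .prop p, v => G.lab v p = true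
  | .neg φ, v => ¬ Sat G φ v
  | .and φ ψ, v => Sat G φ v ∧ Sat G ψ v
  | .dia T j φs, v =>
      j ≤ ((embFinset T G v).filter
        (fun f => ∀ i : Fin T.n, Sat G (φs i) (f i.succ))).card

/-- Modal depth. -/
def GML.md {AP : Type} : GML AP → ℕ
  | .top => 0
  | .prop _ => 0
  | .neg φ => φ.md
  | .and φ ψ => max φ.md ψ.md
  | .dia _ _ φs => 1 + Finset.univ.sup fun i => (φs i).md

/-- Counting bound: the least `c` such that every modality `⟨T⟩^{≥j}` occurring in the
formula has `j ≤ c`. -/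
def GML.cb {AP : Type} : GML AP → ℕ
  | .top => 0
  | .prop _ => 0
  | .neg φ => φ.cb
  | .and φ ψ => max φ.cb ψ.cb
  | .dia _ j φs => max j (Finset.univ.sup fun i => (φs i).cb)

/-- Syntactic depth: counts both Boolean connectives and modalities along the deepest
branch of the syntax tree. -/
def GML.sd {AP : Type} : GML AP → ℕ
  | .top => 0
  | .prop _ => 0
  | .neg φ => 1 + φ.sd
  | .and φ ψ => 1 + max φ.sd ψ.sd
  | .dia _ _ φs => 1 + Finset.univ.sup fun i => (φs i).sd

/-- Well-formedness of a `GML(𝒯)` formula: all templates come from `𝒯` and all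
grades satisfy `j ≥ 1`. -/
def GML.Wf {AP : Type} (𝒯 : Finset Template) : GML AP → Prop
  | .top => True
  | .prop _ => True
  | .neg φ => φ.Wf 𝒯
  | .and φ ψ => φ.Wf 𝒯 ∧ ψ.Wf 𝒯
  | .dia T j φs => T ∈ 𝒯 ∧ 1 ≤ j ∧ ∀ i, (φs i).Wf 𝒯

/-- Finite conjunction (`⊤` for the empty list). -/
def bigConj {AP : Type} : List (GML AP) → GML AP
  | [] => .top
  | φ :: rest => .and φ (bigConj rest)

/-- `|S^{(G,v)}_{T,φ⃗}|`: the number of embeddings `f ∈ emb(T,(G,v))` with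
`(G, f(i)) ⊨ φᵢ` for all `1 ≤ i ≤ n_T`. -/
noncomputable def Scard {AP : Type} (G : LGraph (AP → Bool)) (T : Template) (v : ℕ)
    (φs : Fin T.n → GML AP) : ℕ :=
  ((embFinset T G v).filter (fun f => ∀ i : Fin T.n, Sat G (φs i) (f i.succ))).card

/-- The `l`-characteristic formula `χ^l_{(G,v)}`. -/
noncomputable def charU {AP : Type} [Fintype AP] (𝒯 : Finset Template) :
    ℕ → LGraph (AP → Bool) → ℕ → GML AP
  | 0 => fun G v =>
      bigConj ((Finset.univ : Finset AP).toList.map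
        (fun p => if G.lab v p then GML.prop p else GML.neg (GML.prop p)))
  | l + 1 => fun G v =>
      GML.and (charU 𝒯 l G v)
        (bigConj (𝒯.toList.map (fun T =>
          GML.and
            (bigConj ((embFinset T G v).toList.map (fun f =>
              GML.dia T (Scard G T v (fun i => charU 𝒯 l G (f i.succ)))
                (fun i => charU 𝒯 l G (f i.succ)))))
            (GML.neg (GML.dia T (Scard G T v (fun _ => GML.top) + 1)
              (fun _ => GML.top))))))

/-- `reps m` is a system of representatives for the `m`-`c`-`𝒯`-bisimilarity classes of
finite pointed labelled graphs: every representative is a genuine pointed graph, every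
pointed graph is `m`-`c`-`𝒯`-bisimilar to some representative, and distinct
representatives are non-bisimilar. -/
def RepSystem {AP : Type} (𝒯 : Finset Template) (c : ℕ)
    (reps : ℕ → Finset (LGraph (AP → Bool) × ℕ)) : Prop :=
  ∀ m : ℕ,
    (∀ q ∈ reps m, q.2 ∈ q.1.verts) ∧
    (∀ (G : LGraph (AP → Bool)) (v : ℕ), v ∈ G.verts →
      ∃ q ∈ reps m, BBisimilar 𝒯 m c q.1 q.2 G v) ∧
    (∀ q ∈ reps m, ∀ q' ∈ reps m, BBisimilar 𝒯 m c q.1 q.2 q'.1 q'.2 → q = q')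

/-- The bounded `l`-`c`-characteristic formula `χ^{l,c}_{(G,v)}`, relative to a chosen
system `reps` of representatives of the bounded bisimilarity classes. -/
noncomputable def charB {AP : Type} [Fintype AP] (𝒯 : Finset Template) (c : ℕ)
    (reps : ℕ → Finset (LGraph (AP → Bool) × ℕ)) :
    ℕ → LGraph (AP → Bool) → ℕ → GML AP
  | 0 => fun G v =>
      bigConj ((Finset.univ : Finset AP).toList.map
        (fun p => if G.lab v p then GML.prop p else GML.neg (GML.prop p)))
  | l + 1 => fun G v =>
      GML.and (charB 𝒯 c reps l G v)
        (bigConj (𝒯.toList.map (fun T =>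
          GML.and
            (bigConj ((embFinset T G v).toList.map (fun f =>
              GML.dia T (min c (Scard G T v (fun i => charB 𝒯 c reps l G (f i.succ))))
                (fun i => charB 𝒯 c reps l G (f i.succ)))))
            (bigConj (((Fintype.piFinset (fun _ : Fin T.n => reps l)).filter
                (fun t => Scard G T v
                  (fun i => charB 𝒯 c reps l (t i).1 (t i).2) + 1 ≤ c)).toList.map
              (fun t => GML.neg (GML.dia T
                  (Scard G T v (fun i => charB 𝒯 c reps l (t i).1 (t i).2) + 1)
                  (fun i => charB 𝒯 c reps l (t i).1 (t i).2))))))))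

/-- Standard graded forth condition on out-neighbours. -/
def StdForth {Λ : Type} (Z : ℕ → ℕ → Prop) (G G' : LGraph Λ) (v v' : ℕ) (k : ℕ) : Prop :=
  ∀ us : Fin k → ℕ, Function.Injective us → (∀ i, G.edge v (us i)) →
    ∃ us' : Fin k → ℕ, Function.Injective us' ∧ (∀ i, G'.edge v' (us' i)) ∧
      ∀ i, Z (us i) (us' i)

/-- `Z` is a standard graded `l`-bisimulation (the relation underlying standard 1-WL
colour refinement). -/
def IsStdBisim {Λ : Type} (G G' : LGraph Λ) : ℕ → (ℕ → ℕ → Prop) → Prop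
  | 0, Z => ∀ v v', Z v v' → G.lab v = G'.lab v'
  | l + 1, Z => ∃ Z', IsStdBisim G G' l Z' ∧
      ∀ v v', Z v v' → Z' v v' ∧ ∀ k, 1 ≤ k →
        StdForth Z' G G' v v' k ∧ StdForth (fun a b => Z' b a) G' G v' v k

/-- `(G,v)` and `(G',v')` are standard graded `l`-bisimilar. -/
def StdBisimilar {Λ : Type} (l : ℕ) (G : LGraph Λ) (v : ℕ) (G' : LGraph Λ) (v' : ℕ) : Prop :=
  ∃ Z, IsStdBisim G G' l Z ∧ Z v v'

/-- The edge template `T₁ = ({r,a}, E⁺ = {(r,a)}, E⁻ = ∅, r)`. -/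
def T1 : Template := ⟨1, {(0, 1)}, ∅, by decide⟩

/-- The triangle template `T△ = ({r,a,b}, E⁺ = {(r,a),(a,b),(b,r)}, E⁻ = ∅, r)`. -/
def Ttri : Template := ⟨2, {(0, 1), (1, 2), (2, 0)}, ∅, by decide⟩

/-- The directed 3-cycle, all nodes with the same constant label. -/
def G3 : LGraph Unit where
  verts := {0, 1, 2}
  edge u w := (u = 0 ∧ w = 1) ∨ (u = 1 ∧ w = 2) ∨ (u = 2 ∧ w = 0)
  lab _ := ()
  edge_mem := by rintro u w (⟨rfl, rfl⟩ | ⟨rfl, rfl⟩ | ⟨rfl, rfl⟩) <;> simp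

/-- The directed 6-cycle, all nodes with the same constant label. -/
def G6 : LGraph Unit where
  verts := Finset.range 6
  edge u w := u < 6 ∧ w = (u + 1) % 6
  lab _ := ()
  edge_mem := by
    rintro u w ⟨hu, rfl⟩
    simp only [Finset.mem_range]
    omega

/-!
Soundness: by induction on the layer, the features of any `𝒯`-GNN are constant on graded
bisimulation classes, since the back-and-forth conditions for every multiplicity `k` (take `k` the
number of embeddings) match the multisets of labelled template embeddings exactly.

Completeness: every type a GNN layer consumes has cardinality `𝔠`, so the combination, the outer
aggregation (after capping multiplicities at `c`) and the template aggregation can be chosen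
injective. Once `c` exceeds every embedding count in `G` and `G'` the cap loses nothing, so equal
features at layer `m + 1` force equal features and equal multisets of labelled embeddings at
layer `m`; hence equality of layer-`m` features is a graded `m`-bisimulation. The template
aggregation must be invariant under root-fixing automorphisms of `T`, so it returns the multiset of
the `Aut(T)`-orbit of the labelling; summed over all embeddings this counts each labelled embedding
exactly `|Aut(T)|` times, so the multiset of labelled embeddings is still recovered.
-/

open Finset

section Encoding

open Cardinal

lemma mk_fin_pi_le_continuum {Y : Type} (hY : #Y ≤ 𝔠) (k : ℕ) : #(Fin k → Y) ≤ 𝔠 := by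
  rw [← power_def, mk_fin, power_natCast]
  exact (power_le_power_right hY).trans (power_nat_le aleph0_le_continuum)

lemma mk_multiset_le_continuum {Y : Type} (hY : #Y ≤ 𝔠) : #(Multiset Y) ≤ 𝔠 :=
  (mk_le_of_surjective (f := ((↑) : List Y → Multiset Y)) Quot.mk_surjective).trans <|
    (mk_list_le_max Y).trans (max_le aleph0_le_continuum hY)

lemma mk_prod_le_continuum {Y Y' : Type} (hY : #Y ≤ 𝔠) (hY' : #Y' ≤ 𝔠) : #(Y × Y') ≤ 𝔠 := by
  rw [mk_prod, lift_id, lift_id]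
  exact (mul_le_mul' hY hY').trans (mul_eq_self aleph0_le_continuum).le

lemma mk_fin_real_le_continuum (d : ℕ) : #(Fin d → ℝ) ≤ 𝔠 :=
  mk_fin_pi_le_continuum mk_real.le d

lemma mk_multiset_fin_pi_le_continuum (n d : ℕ) : #(Multiset (Fin n → Fin d → ℝ)) ≤ 𝔠 :=
  mk_multiset_le_continuum (mk_fin_pi_le_continuum (mk_fin_real_le_continuum d) n)

lemma nonempty_embedding_fin_real {X : Type} (hX : #X ≤ 𝔠) (d : ℕ) :
    Nonempty (X ↪ (Fin (d + 1) → ℝ)) := by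
  rw [← le_def, ← power_def, mk_fin, mk_real, power_natCast,
    power_nat_eq aleph0_le_continuum d.succ_pos]
  exact hX

noncomputable def encode {X : Type} (hX : #X ≤ 𝔠) (d : ℕ) : X ↪ (Fin (d + 1) → ℝ) :=
  (nonempty_embedding_fin_real hX d).some

end Encoding

section Cap

variable {α : Type}

lemma count_mcap (c : ℕ) (m : Multiset α) (b : α) :
    (mcap c m).count b = min c (m.count b) := by
  classical
  simp only [mcap, Multiset.count_bind, Multiset.count_replicate]
  rw [← sum_eq_multiset_sum, sum_ite_eq']
  split_ifs with hb
  · rfl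
  · simp [Multiset.count_eq_zero.mpr (by simpa using hb)]

lemma mcap_mcap (c : ℕ) (m : Multiset α) : mcap c (mcap c m) = mcap c m := by
  ext b
  rw [count_mcap, count_mcap, ← min_assoc, min_self]

lemma eq_of_mcap_eq {c : ℕ} {m₁ m₂ : Multiset α} (h : mcap c m₁ = mcap c m₂)
    (h₁ : Multiset.card m₁ ≤ c) (h₂ : Multiset.card m₂ ≤ c) : m₁ = m₂ := by
  ext b
  have hb := congrArg (Multiset.count b) h
  rwa [count_mcap, count_mcap, min_eq_right ((Multiset.count_le_card b m₁).trans h₁),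
    min_eq_right ((Multiset.count_le_card b m₂).trans h₂)] at hb

end Cap

def Template.rootAut (T : Template) : Subgroup (Equiv.Perm (Fin (T.n + 1))) where
  carrier := {σ | σ 0 = 0 ∧ (∀ p, p ∈ T.pos ↔ (σ p.1, σ p.2) ∈ T.pos) ∧
    (∀ p, p ∈ T.neg ↔ (σ p.1, σ p.2) ∈ T.neg)}
  mul_mem' := by
    rintro σ τ ⟨hσ0, hσp, hσn⟩ ⟨hτ0, hτp, hτn⟩
    refine ⟨by simp [hτ0, hσ0], fun p => (hτp p).trans (hσp _), fun p => (hτn p).trans (hσn _)⟩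
  one_mem' := ⟨rfl, fun _ => Iff.rfl, fun _ => Iff.rfl⟩
  inv_mem' := by
    rintro σ ⟨hσ0, hσp, hσn⟩
    refine ⟨Equiv.Perm.inv_eq_iff_eq.mpr hσ0.symm, fun p => ?_, fun p => ?_⟩
    · simpa using (hσp (σ⁻¹ p.1, σ⁻¹ p.2)).symm
    · simpa using (hσn (σ⁻¹ p.1, σ⁻¹ p.2)).symm

section Embeddings

variable {Λ : Type} {T : Template} {H : LGraph Λ} {w : ℕ} {f : Fin (T.n + 1) → ℕ}

lemma mem_embFinset : f ∈ embFinset T H w ↔ IsEmb T H w f := by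
  simp only [embFinset, mem_filter, Fintype.mem_piFinset, and_iff_right_iff_imp]
  exact fun hf => hf.2.2.1

lemma card_embFinset_le_sum {𝒯 : Finset Template} (hT : T ∈ 𝒯) :
    #(embFinset T H w) ≤ ∑ T ∈ 𝒯, #H.verts ^ (T.n + 1) := by
  refine (card_filter_le _ _).trans ?_
  rw [Fintype.card_piFinset, prod_const, card_univ, Fintype.card_fin]
  exact single_le_sum (f := fun T : Template => #H.verts ^ (T.n + 1)) (fun _ _ => Nat.zero_le _) hT

lemma IsEmb.comp_perm (hf : IsEmb T H w f) {σ : Equiv.Perm (Fin (T.n + 1))}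
    (hσ : σ ∈ T.rootAut) : IsEmb T H w (f ∘ σ) := by
  obtain ⟨hinj, hroot, hmem, hpos, hneg⟩ := hf
  obtain ⟨hσ0, hσp, hσn⟩ := hσ
  exact ⟨hinj.comp σ.injective, by simp [hσ0, hroot], fun i => hmem _,
    fun p hp => hpos _ ((hσp p).mp hp), fun p hp => hneg _ ((hσn p).mp hp)⟩

end Embeddings

section Patterns

variable {X : Type} [Zero X]

-- The root label is dropped because `aggT_inv` constrains template aggregation only off the root.
def embPattern {n : ℕ} (χ : ℕ → X) (f : Fin (n + 1) → ℕ) : Fin (n + 1) → X :=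
  Function.update (χ ∘ f) 0 0

noncomputable def orbitPatterns (T : Template) (lab : Fin (T.n + 1) → X) :
    Multiset (Fin (T.n + 1) → X) :=
  ∑ σ : T.rootAut, {Function.update (lab ∘ σ.1) 0 0}

lemma orbitPatterns_eq_of_perm {T : Template} {σ : Equiv.Perm (Fin (T.n + 1))}
    (hσ : σ ∈ T.rootAut) {lab₁ lab₂ : Fin (T.n + 1) → X}
    (h : ∀ u, u ≠ 0 → lab₁ u = lab₂ (σ u)) : orbitPatterns T lab₁ = orbitPatterns T lab₂ := by
  refine Fintype.sum_equiv (Equiv.mulLeft ⟨σ, hσ⟩) _ _ fun τ => congrArg _ (funext fun u => ?_)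
  rcases eq_or_ne u 0 with rfl | hu
  · simp
  · have hτu : τ.1 u ≠ 0 := fun h0 => hu (τ.1.injective (h0.trans τ.2.1.symm))
    simp [Function.update_of_ne hu, h _ hτu]

lemma sum_orbitPatterns_embFinset {Λ : Type} (T : Template) (H : LGraph Λ) (w : ℕ)
    (χ : ℕ → X) :
    ∑ f ∈ embFinset T H w, orbitPatterns T (χ ∘ f)
      = Fintype.card T.rootAut • (embFinset T H w).val.map (embPattern χ) := by
  have reindex : ∀ σ : T.rootAut, ∑ f ∈ embFinset T H w, ({embPattern χ (f ∘ σ.1)} : Multiset _)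
      = ∑ f ∈ embFinset T H w, {embPattern χ f} := fun σ =>
    sum_nbij' (· ∘ σ.1) (· ∘ (σ⁻¹).1)
      (fun f hf => mem_embFinset.mpr ((mem_embFinset.mp hf).comp_perm σ.2))
      (fun f hf => mem_embFinset.mpr ((mem_embFinset.mp hf).comp_perm (inv_mem σ.2)))
      (fun f _ => by ext; simp) (fun f _ => by ext; simp) (fun _ _ => rfl)
  calc ∑ f ∈ embFinset T H w, orbitPatterns T (χ ∘ f)
      = ∑ σ : T.rootAut, ∑ f ∈ embFinset T H w, {embPattern χ (f ∘ σ.1)} := sum_comm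
    _ = Fintype.card T.rootAut • ∑ f ∈ embFinset T H w, {embPattern χ f} := by
      simp only [reindex, sum_const, card_univ]
    _ = _ := by
      rw [sum_eq_multiset_sum]
      congr 1
      simpa [Multiset.map_map] using
        Multiset.sum_map_singleton ((embFinset T H w).val.map (embPattern χ))

lemma map_embPattern_eq_of_map_orbitPatterns_eq {Λ : Type} {T : Template} {H H' : LGraph Λ}
    {w w' : ℕ} {χ χ' : ℕ → X}
    (h : (embFinset T H w).val.map (fun f => orbitPatterns T (χ ∘ f))
      = (embFinset T H' w').val.map (fun f => orbitPatterns T (χ' ∘ f))) :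
    (embFinset T H w).val.map (embPattern χ) = (embFinset T H' w').val.map (embPattern χ') := by
  have hsum := congrArg Multiset.sum h
  rw [← sum_eq_multiset_sum, ← sum_eq_multiset_sum, sum_orbitPatterns_embFinset,
    sum_orbitPatterns_embFinset] at hsum
  exact nsmul_right_injective Fintype.card_ne_zero hsum

end Patterns

section Matching

lemma Finset.exists_equiv_of_map_val_eq {α α' β : Type} {s : Finset α} {s' : Finset α'}
    {g : α → β} {g' : α' → β} (h : s.val.map g = s'.val.map g') :
    ∃ e : s ≃ s', ∀ x, g' (e x) = g x := by
  classical
  have hfib : ∀ b, Fintype.card {x : s // g x = b} = Fintype.card {x : s' // g' x = b} :=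
    fun b => by
      rw [Fintype.card_subtype, Fintype.card_subtype, univ_eq_attach, univ_eq_attach,
        filter_attach (g · = b), filter_attach (g' · = b), card_map, card_map, card_attach,
        card_attach]
      simpa [Multiset.count_map, eq_comm, card_def] using congrArg (Multiset.count b) h
  exact ⟨Equiv.ofFiberEquiv fun b => Fintype.equivOfCardEq (hfib b),
    fun x => Equiv.ofFiberEquiv_map (f := fun x : s => g x) (g := fun x : s' => g' x) _ x⟩

end Matching

section Forth

variable {Λ : Type} {T : Template} {H H' : LGraph Λ} {w w' : ℕ} {Z : ℕ → ℕ → Prop}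

lemma forth_of_map_embPattern_eq {X : Type} [Zero X] {χ χ' : ℕ → X}
    (hZ : ∀ x y, χ x = χ' y → Z x y) (hroot : χ w = χ' w')
    (h : (embFinset T H w).val.map (embPattern χ) = (embFinset T H' w').val.map (embPattern χ'))
    (k : ℕ) : Forth Z T H H' w w' k := by
  obtain ⟨e, he⟩ := exists_equiv_of_map_val_eq h
  intro F hF hFemb
  let F' i := (e ⟨F i, mem_embFinset.mpr (hFemb i)⟩).1
  have hF'emb i : IsEmb T H' w' (F' i) := mem_embFinset.mp (e _).2
  refine ⟨F', fun i j hij => hF (congrArg Subtype.val (e.injective (Subtype.ext hij))),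
    hF'emb, fun i u => hZ _ _ ?_⟩
  rcases eq_or_ne u 0 with rfl | hu
  · rw [(hFemb i).2.1, (hF'emb i).2.1, hroot]
  · simpa [embPattern, Function.update_of_ne hu] using congrFun (he ⟨F i, _⟩) u |>.symm

lemma map_le_map_of_forth {β : Type} {g g' : (Fin (T.n + 1) → ℕ) → β}
    (hforth : ∀ k, 1 ≤ k → Forth Z T H H' w w' k)
    (hg : ∀ f f', (∀ u, Z (f u) (f' u)) → g f = g' f') :
    (embFinset T H w).val.map g ≤ (embFinset T H' w').val.map g' := by
  rcases Nat.eq_zero_or_pos #(embFinset T H w) with hk | hk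
  · simp [card_eq_zero.mp hk]
  set e := (embFinset T H w).equivFin
  obtain ⟨F', hF'inj, hF'emb, hZF'⟩ := hforth _ hk (fun i => (e.symm i).1)
    (Subtype.val_injective.comp e.symm.injective) (fun i => mem_embFinset.mp (e.symm i).2)
  calc (embFinset T H w).val.map g = univ.val.map (fun i => g (e.symm i).1) := by
        rw [show (fun i => g (e.symm i).1) = (fun x => g x.1) ∘ e.symm from rfl,
          ← Multiset.map_map, Multiset.map_univ_val_equiv]
        exact (Multiset.attach_map_val' _ g).symm
    _ = (univ.map ⟨F', hF'inj⟩).val.map g' := by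
        rw [map_val, Multiset.map_map]
        exact Multiset.map_congr rfl fun i _ => hg _ _ (hZF' i)
    _ ≤ (embFinset T H' w').val.map g' := by
        refine Multiset.map_le_map (val_le_iff.mpr fun f hf => ?_)
        obtain ⟨i, -, rfl⟩ := mem_map.mp hf
        exact mem_embFinset.mpr (hF'emb i)

lemma map_eq_map_of_forth {β : Type} {g g' : (Fin (T.n + 1) → ℕ) → β}
    (hforth : ∀ k, 1 ≤ k → Forth Z T H H' w w' k ∧ Forth (fun a b => Z b a) T H' H w' w k)
    (hg : ∀ f f', (∀ u, Z (f u) (f' u)) → g f = g' f') :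
    (embFinset T H w).val.map g = (embFinset T H' w').val.map g' :=
  le_antisymm (map_le_map_of_forth (fun k hk => (hforth k hk).1) hg)
    (map_le_map_of_forth (fun k hk => (hforth k hk).2) fun f' f h => (hg f f' h).symm)

end Forth

section Invariance

variable {𝒯 : Finset Template} {d nAr L : ℕ}

lemma TGNN.feat_eq_of_isBisimP (N : TGNN 𝒯 d nAr L) {H H' : LGraph (Fin d → ℝ)} {m : ℕ}
    {Z : ℕ → ℕ → Prop} (hZ : IsBisimP 𝒯 (fun k => 1 ≤ k) H H' m Z) {w w' : ℕ} (hw : Z w w') :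
    N.feat H m w = N.feat H' m w' := by
  induction m generalizing Z w w' with
  | zero => exact hZ w w' hw
  | succ m ih =>
    obtain ⟨Z', hZ', hstep⟩ := hZ
    obtain ⟨hw', hforth⟩ := hstep w w' hw
    simp only [TGNN.feat]
    split_ifs with hm
    · rw [ih hZ' hw']
      congr 1
      funext j
      exact congrArg _ (map_eq_map_of_forth (hforth _ (N.temp_mem _ j))
        fun f f' hff' => congrArg _ (funext fun u => ih hZ' (hff' u)))
    · rfl

lemma IsBisimP.initG {a : ℕ} {P : ℕ → Prop} {G G' : LGraph (Fin a → Bool)} {m : ℕ}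
    {Z : ℕ → ℕ → Prop} (hZ : IsBisimP 𝒯 P G G' m Z) :
    IsBisimP 𝒯 P (initG d G) (initG d G') m Z := by
  induction m generalizing Z with
  | zero => exact fun v v' hvv' => by simp only [_root_.initG, hZ v v' hvv']
  | succ m ih =>
    obtain ⟨Z', hZ', hstep⟩ := hZ
    exact ⟨Z', ih hZ', hstep⟩

end Invariance

section InjectiveTGNN

variable (𝒯 : Finset Template) (d L c : ℕ)

noncomputable def injectiveTGNN : TGNN 𝒯 (d + 1) #𝒯 L where
  temp _ j := 𝒯.equivFin.symm j
  temp_mem _ j := (𝒯.equivFin.symm j).2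
  aggT _ _ lab := encode (mk_multiset_fin_pi_le_continuum _ _) d (orbitPatterns _ lab)
  aggT_inv _ _ _ _ _ h0 hpos hneg hlab :=
    congrArg _ (orbitPatterns_eq_of_perm ⟨h0, hpos, hneg⟩ hlab)
  agg _ _ m := encode (mk_multiset_le_continuum (mk_fin_real_le_continuum _)) d (mcap c m)
  comb _ x ys := encode (mk_prod_le_continuum (mk_fin_real_le_continuum _)
    (mk_fin_pi_le_continuum (mk_fin_real_le_continuum _) _)) d (x, ys)
  cls _ := true

lemma injectiveTGNN_isCBounded : (injectiveTGNN 𝒯 d L c).IsCBounded c :=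
  fun _ _ m => congrArg (encode _ d) (mcap_mcap c m).symm

variable {𝒯 d L c}

lemma map_embPattern_eq_of_feat_succ_eq {H H' : LGraph (Fin (d + 1) → ℝ)}
    (hH : ∀ T ∈ 𝒯, ∀ w, #(embFinset T H w) ≤ c) (hH' : ∀ T ∈ 𝒯, ∀ w, #(embFinset T H' w) ≤ c)
    {m : ℕ} (hm : m < L) {x y : ℕ}
    (h : (injectiveTGNN 𝒯 d L c).feat H (m + 1) x = (injectiveTGNN 𝒯 d L c).feat H' (m + 1) y) :
    (injectiveTGNN 𝒯 d L c).feat H m x = (injectiveTGNN 𝒯 d L c).feat H' m y ∧ ∀ T ∈ 𝒯,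
      (embFinset T H x).val.map (embPattern ((injectiveTGNN 𝒯 d L c).feat H m))
        = (embFinset T H' y).val.map (embPattern ((injectiveTGNN 𝒯 d L c).feat H' m)) := by
  simp only [TGNN.feat, dif_pos hm] at h
  obtain ⟨hfeat, hagg⟩ := Prod.ext_iff.mp ((encode _ d).injective h)
  refine ⟨hfeat, fun T hT => map_embPattern_eq_of_map_orbitPatterns_eq ?_⟩
  obtain ⟨j, rfl⟩ : ∃ j, (𝒯.equivFin.symm j : Template) = T := ⟨𝒯.equivFin ⟨T, hT⟩, by simp⟩
  have hcap := (encode _ d).injective (congrFun hagg j)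
  have hmaps := eq_of_mcap_eq hcap ((Multiset.card_map _ _).trans_le (hH _ hT x))
    ((Multiset.card_map _ _).trans_le (hH' _ hT y))
  refine Multiset.map_injective (encode (mk_multiset_fin_pi_le_continuum _ _) d).injective ?_
  rw [Multiset.map_map, Multiset.map_map]
  exact hmaps

end InjectiveTGNN

lemma boolToReal_injective : Function.Injective boolToReal := by
  intro x y h
  cases x <;> cases y <;> simp_all [boolToReal]

lemma initG_lab_injective {a d : ℕ} (had : a ≤ d) {G G' : LGraph (Fin a → Bool)} {x y : ℕ}
    (h : (initG d G).lab x = (initG d G').lab y) : G.lab x = G'.lab y := by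
  funext p
  have hp := congrFun h ⟨p, p.2.trans_le had⟩
  simp only [initG, Fin.is_lt, dif_pos, Fin.eta] at hp
  exact boolToReal_injective hp

lemma isBisimP_feat_eq_injectiveTGNN {a : ℕ} {𝒯 : Finset Template} {L c : ℕ}
    {G G' : LGraph (Fin a → Bool)} (hG : ∀ T ∈ 𝒯, ∀ w, #(embFinset T G w) ≤ c)
    (hG' : ∀ T ∈ 𝒯, ∀ w, #(embFinset T G' w) ≤ c) {m : ℕ} (hm : m ≤ L) :
    IsBisimP 𝒯 (fun k => 1 ≤ k) G G' m fun x y =>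
      (injectiveTGNN 𝒯 a L c).feat (initG (a + 1) G) m x
        = (injectiveTGNN 𝒯 a L c).feat (initG (a + 1) G') m y := by
  induction m with
  | zero => exact fun x y h => initG_lab_injective a.le_succ h
  | succ m ih =>
    refine ⟨_, ih (by omega), fun x y hxy => ?_⟩
    obtain ⟨hfeat, hpat⟩ := map_embPattern_eq_of_feat_succ_eq hG hG' hm hxy
    exact ⟨hfeat, fun T hT k _ =>
      ⟨forth_of_map_embPattern_eq (fun _ _ => id) hfeat (hpat T hT) k,
        forth_of_map_embPattern_eq (fun _ _ => Eq.symm) hfeat.symm (hpat T hT).symm k⟩⟩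

def TGNN.withCls {𝒯 : Finset Template} {d nAr L : ℕ} (N : TGNN 𝒯 d nAr L)
    (cls : (Fin d → ℝ) → Bool) : TGNN 𝒯 d nAr L :=
  { N with cls }

lemma TGNN.feat_withCls {𝒯 : Finset Template} {d nAr L : ℕ} (N : TGNN 𝒯 d nAr L)
    (cls : (Fin d → ℝ) → Bool) : (N.withCls cls).feat = N.feat := by
  funext H m
  induction m with
  | zero => rfl
  | succ m ih => funext w; simp only [TGNN.feat, ih]; rfl

theorem gnn_separation_iff_not_bisimilar_general {a : ℕ} (𝒯 : Finset Template)
    (G G' : LGraph (Fin a → Bool)) (v v' : ℕ) :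
    (∃ (d nAr L : ℕ) (N : TGNN 𝒯 d nAr L) (c : ℕ), 1 ≤ c ∧ N.IsCBounded c ∧
        N.cls (N.feat (initG d G) L v) ≠ N.cls (N.feat (initG d G') L v'))
    ↔ (∃ l : ℕ, ¬ GBisimilar 𝒯 l G v G' v') := by
  constructor
  · rintro ⟨d, nAr, L, N, c, -, -, hne⟩
    exact ⟨L, fun ⟨Z, hZ, hvv'⟩ => hne (by rw [N.feat_eq_of_isBisimP hZ.initG hvv'])⟩
  · rintro ⟨l, hl⟩
    set c := ∑ T ∈ 𝒯, #G.verts ^ (T.n + 1) + ∑ T ∈ 𝒯, #G'.verts ^ (T.n + 1) + 1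
    have hG : ∀ T ∈ 𝒯, ∀ w, #(embFinset T G w) ≤ c :=
      fun _ hT _ => (card_embFinset_le_sum hT).trans (by omega)
    have hG' : ∀ T ∈ 𝒯, ∀ w, #(embFinset T G' w) ≤ c :=
      fun _ hT _ => (card_embFinset_le_sum hT).trans (by omega)
    set N := injectiveTGNN 𝒯 a l c
    have hne : N.feat (initG (a + 1) G) l v ≠ N.feat (initG (a + 1) G') l v' :=
      fun h => hl ⟨_, isBisimP_feat_eq_injectiveTGNN hG hG' le_rfl, h⟩
    refine ⟨a + 1, #𝒯, l, N.withCls (· = N.feat (initG (a + 1) G) l v), c, by omega,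
      injectiveTGNN_isCBounded 𝒯 a l c, ?_⟩
    rw [TGNN.feat_withCls]
    simpa [TGNN.withCls] using hne.symm

/-- Two finite pointed labelled graphs can be separated by some bounded
`𝒯`-GNN with Boolean classification iff they fail to be graded `l`-`𝒯`-bisimilar for
some `l`. -/
theorem gnn_separation_iff_not_bisimilar {a : ℕ} (𝒯 : Finset Template)
    (G G' : LGraph (Fin a → Bool)) (v v' : ℕ)
    (hv : v ∈ G.verts) (hv' : v' ∈ G'.verts) :
    (∃ (d nAr L : ℕ) (N : TGNN 𝒯 d nAr L) (c : ℕ), 1 ≤ c ∧ N.IsCBounded c ∧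
        N.cls (N.feat (initG d G) L v) ≠ N.cls (N.feat (initG d G') L v'))
    ↔ (∃ l : ℕ, ¬ GBisimilar 𝒯 l G v G' v') :=
  gnn_separation_iff_not_bisimilar_general 𝒯 G G' v v'
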